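/- With φ : Cob~(A_0) → B_0 as above and ψ : B_0 → Cob~(A_0) defined by ψ(ρ_i) = U_i^*, ψ(σ_i) = s_i^*, extended by ψ(b_n ··· b_1) = ψ(b_1) ⊗ ··· ⊗ ψ(b_n) using unique factorization into length-one generators, the composite φ ∘ ψ is the identity on B_0. -/

import Mathlib

/-- The ground ring 𝔽₂. -/
abbrev GroundRing := ZMod 2

/-- Generators of the associative algebra `A₀`: idempotents `I i`, and elements
`U i`, `s i`, for `i` ranging over `Fin N` (indices are taken mod `N`). -/
inductive AGen (N : ℕ) : Type
  | I : Fin N → AGen N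
  | U : Fin N → AGen N
  | s : Fin N → AGen N
deriving DecidableEq

variable (N : ℕ) [NeZero N]

open FreeAlgebra in
/-- The defining relations of `A₀` from the paper:
`I_i I_j = δ_{ij} I_i`; `I_j U_i = U_i I_j = δ_{ij} U_i`; `I_j s_i = δ_{ij} s_i`;
`s_i I_j = s_i` iff `j = i+1 (mod N)`; `U_i U_j = 0` for `i ≠ j`;
`U_i s_j = s_j U_i = 0`; `s_i s_j = 0` unless `j = i+1 (mod N)`. -/
inductive ARel : FreeAlgebra GroundRing (AGen N) → FreeAlgebra GroundRing (AGen N) → Prop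
  | II (i j : Fin N) : ARel (ι GroundRing (AGen.I i) * ι GroundRing (AGen.I j))
      (if i = j then ι GroundRing (AGen.I i) else 0)
  | IU (i j : Fin N) : ARel (ι GroundRing (AGen.I j) * ι GroundRing (AGen.U i))
      (if i = j then ι GroundRing (AGen.U i) else 0)
  | UI (i j : Fin N) : ARel (ι GroundRing (AGen.U i) * ι GroundRing (AGen.I j))
      (if i = j then ι GroundRing (AGen.U i) else 0)
  | Is (i j : Fin N) : ARel (ι GroundRing (AGen.I j) * ι GroundRing (AGen.s i))
      (if j = i then ι GroundRing (AGen.s i) else 0)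
  | sI (i j : Fin N) : ARel (ι GroundRing (AGen.s i) * ι GroundRing (AGen.I j))
      (if j = i + 1 then ι GroundRing (AGen.s i) else 0)
  | UU (i j : Fin N) : i ≠ j → ARel (ι GroundRing (AGen.U i) * ι GroundRing (AGen.U j)) 0
  | Us (i j : Fin N) : ARel (ι GroundRing (AGen.U i) * ι GroundRing (AGen.s j)) 0
  | sU (i j : Fin N) : ARel (ι GroundRing (AGen.s j) * ι GroundRing (AGen.U i)) 0
  | ss (i j : Fin N) : j ≠ i + 1 → ARel (ι GroundRing (AGen.s i) * ι GroundRing (AGen.s j)) 0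

/-- The associative algebra `A₀`, presented by the above generators and relations. -/
abbrev A0 := RingQuot (ARel N)

/-- The idempotent generator `I i` of `A₀`. -/
noncomputable def aI (i : Fin N) : A0 N :=
  RingQuot.mkAlgHom GroundRing (ARel N) (FreeAlgebra.ι GroundRing (AGen.I i))

/-- The generator `U i` of `A₀`. -/
noncomputable def aU (i : Fin N) : A0 N :=
  RingQuot.mkAlgHom GroundRing (ARel N) (FreeAlgebra.ι GroundRing (AGen.U i))

/-- The generator `s i` of `A₀`. -/
noncomputable def aS (i : Fin N) : A0 N :=
  RingQuot.mkAlgHom GroundRing (ARel N) (FreeAlgebra.ι GroundRing (AGen.s i))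

open Fin.NatCast in
/-- `s_{ii} = s_i s_{i+1} ⋯ s_{i-1}`, the full cyclic product of the `N` generators
`s_j` starting at index `i` (indices mod `N`). -/
noncomputable def scyc (i : Fin N) : A0 N :=
  ((List.range N).map (fun k => aS N (i + (k : Fin N)))).prod

/-- Generators of the associative algebra `B₀`: idempotents `I j`, and elements
`ρ j`, `σ j`, for `j` ranging over `Fin N` (indices mod `N`). -/
inductive BGen (N : ℕ) : Type
  | I : Fin N → BGen N
  | rho : Fin N → BGen N
  | sigma : Fin N → BGen N
deriving DecidableEq

variable (N : ℕ) [NeZero N]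

open FreeAlgebra in
/-- The defining relations of `B₀` from the paper:
`I_i I_j = δ_{ij} I_i`; `I_i ρ_j = ρ_j I_i = δ_{ij} ρ_i`; `I_i σ_j = δ_{ij} σ_i`;
`σ_j I_i = σ_j` iff `j ≡ i − 1 (mod N)`; `ρ_i ρ_j = 0` for all `i,j`;
`σ_i σ_j = 0` for all `i,j`; `ρ_i σ_j = 0` unless `i = j`;
`σ_i ρ_j = 0` unless `j ≡ i + 1 (mod N)`. -/
inductive BRel : FreeAlgebra GroundRing (BGen N) → FreeAlgebra GroundRing (BGen N) → Prop
  | II (i j : Fin N) : BRel (ι GroundRing (BGen.I i) * ι GroundRing (BGen.I j))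
      (if i = j then ι GroundRing (BGen.I i) else 0)
  | Ir (i j : Fin N) : BRel (ι GroundRing (BGen.I i) * ι GroundRing (BGen.rho j))
      (if i = j then ι GroundRing (BGen.rho j) else 0)
  | rI (i j : Fin N) : BRel (ι GroundRing (BGen.rho j) * ι GroundRing (BGen.I i))
      (if i = j then ι GroundRing (BGen.rho j) else 0)
  | Is (i j : Fin N) : BRel (ι GroundRing (BGen.I i) * ι GroundRing (BGen.sigma j))
      (if i = j then ι GroundRing (BGen.sigma j) else 0)
  | sI (i j : Fin N) : BRel (ι GroundRing (BGen.sigma j) * ι GroundRing (BGen.I i))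
      (if i = j + 1 then ι GroundRing (BGen.sigma j) else 0)
  | rr (i j : Fin N) : BRel (ι GroundRing (BGen.rho i) * ι GroundRing (BGen.rho j)) 0
  | ss (i j : Fin N) : BRel (ι GroundRing (BGen.sigma i) * ι GroundRing (BGen.sigma j)) 0
  | rs (i j : Fin N) : i ≠ j →
      BRel (ι GroundRing (BGen.rho i) * ι GroundRing (BGen.sigma j)) 0
  | sr (i j : Fin N) : j ≠ i + 1 →
      BRel (ι GroundRing (BGen.sigma i) * ι GroundRing (BGen.rho j)) 0

/-- The associative algebra `B₀`, presented by the above generators and relations. -/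
abbrev B0 := RingQuot (BRel N)

/-- The idempotent generator `I j` of `B₀`. -/
noncomputable def bI (j : Fin N) : B0 N :=
  RingQuot.mkAlgHom GroundRing (BRel N) (FreeAlgebra.ι GroundRing (BGen.I j))

/-- The generator `ρ j` of `B₀`. -/
noncomputable def bR (j : Fin N) : B0 N :=
  RingQuot.mkAlgHom GroundRing (BRel N) (FreeAlgebra.ι GroundRing (BGen.rho j))

/-- The generator `σ j` of `B₀`. -/
noncomputable def bS (j : Fin N) : B0 N :=
  RingQuot.mkAlgHom GroundRing (BRel N) (FreeAlgebra.ι GroundRing (BGen.sigma j))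

/-- The image in `B₀` of a generator. -/
noncomputable def bToB0 : BGen N → B0 N
  | BGen.I j => bI N j
  | BGen.rho j => bR N j
  | BGen.sigma j => bS N j

/-- The product in `B₀` of a word in the generators. -/
noncomputable def prodB (w : List (BGen N)) : B0 N := (w.map (bToB0 N)).prod

/-- Letters for monomials of the augmentation ideal `A₊` of `A₀`: the generators `U i`, `s i`. -/
inductive APGen (N : ℕ) : Type
  | U : Fin N → APGen N
  | s : Fin N → APGen N
deriving DecidableEq

instance : Inhabited (APGen N) := ⟨APGen.U default⟩

/-- The image in `A₀` of a letter. -/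
noncomputable def apToA0 : APGen N → A0 N
  | APGen.U i => aU N i
  | APGen.s i => aS N i

/-- The product in `A₀` of a word in the letters (a basic monomial of `A₊`). -/
noncomputable def prodA (w : List (APGen N)) : A0 N := (w.map (apToA0 N)).prod

/-- The index of the initial idempotent of a letter. -/
def initIdxA : APGen N → Fin N
  | APGen.U j => j
  | APGen.s j => j

/-- The index of the final idempotent of a letter (`U_j I_j = U_j`, `s_j I_{j+1} = s_j`). -/
def finIdxA : APGen N → Fin N
  | APGen.U j => j
  | APGen.s j => j + 1

/-- The map `φ` on length-one generators: `φ(U_i^*) = ρ_i`, `φ(s_i^*) = σ_i`. -/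
noncomputable def phiGen : APGen N → B0 N
  | APGen.U i => bR N i
  | APGen.s i => bS N i

/-- A basis string `a₁^* ⊗ ⋯ ⊗ a_n^*` of the unital cobar complex `Cob~(A₀)`, encoded
as a list of (nonempty) words in the letters `U, s`: each word represents the basic
monomial `a_k` of `A₊` whose dual `a_k^*` is the `k`-th tensor factor. -/
abbrev CobStr (N : ℕ) := List (List (APGen N))

/-- The map `φ : Cob~(A₀) → B₀` on basis strings: `φ(a₁^* ⊗ ⋯ ⊗ a_n^*) = φ(a_n)⋯φ(a_1)`
if all `a_k` have length one (`φ` reverses order), and `φ = 0` on strings containing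
a dual of an element of length `> 1`. -/
noncomputable def phiW (ξ : CobStr N) : B0 N :=
  if ξ.all (fun w => w.length == 1) then
    ((ξ.reverse.map (fun w => phiGen N (w.headD default))).prod)
  else 0

/-- The result of replacing the `i`-th word `a_i` of a cobar string by the pair
`(a_i)_{≤ k}, (a_i)_{> k}`: one term of the cobar differential
`δ^{Cob}(… ⊗ a_i^* ⊗ …) = … ⊗ μ₂^*(a_i^*) ⊗ …`, dual to the factorization of the
monomial `a_i` at position `k`. -/
def splitA (ξ : CobStr N) (i k : ℕ) : CobStr N :=
  ξ.take i ++ [(ξ.getD i []).take k, (ξ.getD i []).drop k] ++ ξ.drop (i + 1)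

/-- The unitality (idempotent-matching) condition defining `Cob~(A₀)` inside the full
cobar complex: the initial idempotent of each `a_k` equals the final idempotent of
`a_{k-1}`. -/
def matchingStr (ξ : CobStr N) : Prop :=
  ξ.Chain' (fun u v => finIdxA N (u.getLastD default) = initIdxA N (v.headD default))

/-- Letters for monomials of the augmentation ideal `B₊` of `B₀`: the length-one
generators `ρ j`, `σ j`. -/
inductive BPGen (N : ℕ) : Type
  | rho : Fin N → BPGen N
  | sigma : Fin N → BPGen N
deriving DecidableEq

/-- The image in `B₀` of a letter. -/
noncomputable def bpToB0 : BPGen N → B0 N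
  | BPGen.rho j => bR N j
  | BPGen.sigma j => bS N j

/-- The product in `B₀` of a word in the letters `ρ, σ` (a basic monomial of `B₊`,
multiplied in the written order `b_n ⋯ b_1`). -/
noncomputable def prodBP (w : List (BPGen N)) : B0 N := (w.map (bpToB0 N)).prod

/-- The map `ψ` on letters: `ψ(ρ_i) = U_i^*`, `ψ(σ_i) = s_i^*`. -/
def psiGen : BPGen N → APGen N
  | BPGen.rho i => APGen.U i
  | BPGen.sigma i => APGen.s i

/-- The map `ψ : B₀ → Cob~(A₀)` on basic monomials:
`ψ(b_n ⋯ b_1) = ψ(b_1) ⊗ ⋯ ⊗ ψ(b_n)`, using the unique factorization into length-one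
generators (each tensor factor is a singleton word). -/
def psiW (w : List (BPGen N)) : CobStr N :=
  (w.map (fun b => [psiGen N b])).reverse

theorem phiGen_psiGen (b : BPGen N) : phiGen N (psiGen N b) = bpToB0 N b := by
  cases b <;> rfl

theorem phiW_of_forall_length_one (ξ : CobStr N) (h : ∀ w ∈ ξ, w.length = 1) :
    phiW N ξ = (ξ.reverse.map fun w => phiGen N (w.headD default)).prod := by
  rw [phiW, if_pos (List.all_eq_true.mpr fun w hw => beq_iff_eq.mpr (h w hw))]

theorem phi_comp_psi_eq_id (w : List (BPGen N)) :
    phiW N (psiW N w) = prodBP N w := by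
  rw [phiW_of_forall_length_one N _ (by simp [psiW]), psiW, List.reverse_reverse, List.map_map]
  exact congrArg List.prod (List.map_congr_left fun b _ => phiGen_psiGen N b)
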